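/- For every k ≥ 0, ⟨∇_u G(u^k,v^k), u^{k+1} − u^k⟩ + J(u^{k+1}) − J(u^k) + ⟨q^k, Θ(u^{k+1}) − Θ(u^k)⟩ ≤ −(β/(2ε^k) − ‖q^k‖L_Ω/2)‖u^k − u^{k+1}‖². -/

import Mathlib

open scoped RealInnerProductSpace BigOperators
open Filter

noncomputable section

/-- Problem data for the NAPP-AL method applied to
`min G(u,v)+J(u)+H(v)  s.t.  Ω(u)+Φ(u)+Bv = 0, u ∈ U`. -/
structure NAPP (n d m : ℕ) where
  /-- the closed convex constraint set -/
  U : Set (EuclideanSpace ℝ (Fin n))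
  G : EuclideanSpace ℝ (Fin n) → EuclideanSpace ℝ (Fin d) → ℝ
  /-- partial gradient of `G` in `u` -/
  Gu : EuclideanSpace ℝ (Fin n) → EuclideanSpace ℝ (Fin d) → EuclideanSpace ℝ (Fin n)
  /-- partial gradient of `G` in `v` -/
  Gv : EuclideanSpace ℝ (Fin n) → EuclideanSpace ℝ (Fin d) → EuclideanSpace ℝ (Fin d)
  H : EuclideanSpace ℝ (Fin d) → ℝ
  /-- gradient of `H` -/
  Hg : EuclideanSpace ℝ (Fin d) → EuclideanSpace ℝ (Fin d)
  J : EuclideanSpace ℝ (Fin n) → ℝ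
  /-- Ω -/
  Om : EuclideanSpace ℝ (Fin n) → EuclideanSpace ℝ (Fin m)
  /-- Jacobian of Ω -/
  Omd : EuclideanSpace ℝ (Fin n) → (EuclideanSpace ℝ (Fin n) →L[ℝ] EuclideanSpace ℝ (Fin m))
  /-- gradient of the `j`-th component of Ω -/
  Omg : Fin m → EuclideanSpace ℝ (Fin n) → EuclideanSpace ℝ (Fin n)
  /-- Φ -/
  Phi : EuclideanSpace ℝ (Fin n) → EuclideanSpace ℝ (Fin m)
  /-- Jacobian of Φ -/
  Phid : EuclideanSpace ℝ (Fin n) → (EuclideanSpace ℝ (Fin n) →L[ℝ] EuclideanSpace ℝ (Fin m))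
  B : EuclideanSpace ℝ (Fin d) →L[ℝ] EuclideanSpace ℝ (Fin m)
  K : EuclideanSpace ℝ (Fin n) → ℝ
  /-- gradient of `K` -/
  Kg : EuclideanSpace ℝ (Fin n) → EuclideanSpace ℝ (Fin n)
  LG : ℝ
  LH : ℝ
  LK : ℝ
  /-- `L⁰_Θ` -/
  LT : ℝ
  /-- Lipschitz constants of the component gradients of Ω -/
  LOmj : Fin m → ℝ
  beta : ℝ
  /-- `μ > 0` with `‖Bx‖² ≥ μ‖x‖²` and `‖Bᵀy‖² ≥ μ‖y‖²` on `Im B` -/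
  mu : ℝ
  gamma : ℝ

namespace NAPP

variable {n d m : ℕ}

/-- `Θ = Ω + Φ` -/
def Th (S : NAPP n d m) (u : EuclideanSpace ℝ (Fin n)) : EuclideanSpace ℝ (Fin m) :=
  S.Om u + S.Phi u

/-- Jacobian of `Θ` -/
def Thd (S : NAPP n d m) (u : EuclideanSpace ℝ (Fin n)) :
    EuclideanSpace ℝ (Fin n) →L[ℝ] EuclideanSpace ℝ (Fin m) :=
  S.Omd u + S.Phid u

/-- the Bregman distance associated with `K` -/
def D (S : NAPP n d m) (u u' : EuclideanSpace ℝ (Fin n)) : ℝ :=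
  S.K u - S.K u' - ⟪S.Kg u', u - u'⟫

/-- `L_Ω := Σ_j L_{Ω_j}` -/
def LOm (S : NAPP n d m) : ℝ := ∑ j, S.LOmj j

/-- the overall objective `F(u,v) = G(u,v) + J(u) + H(v)` -/
def F (S : NAPP n d m) (u : EuclideanSpace ℝ (Fin n)) (v : EuclideanSpace ℝ (Fin d)) : ℝ :=
  S.G u v + S.J u + S.H v

/-- the augmented Lagrangian `L_γ` -/
def Lag (S : NAPP n d m) (u : EuclideanSpace ℝ (Fin n)) (v : EuclideanSpace ℝ (Fin d))
    (p : EuclideanSpace ℝ (Fin m)) : ℝ :=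
  S.F u v + ⟪p, S.Th u + S.B v⟫ + S.gamma / 2 * ‖S.Th u + S.B v‖ ^ 2

def c1 (S : NAPP n d m) : ℝ := 7 * (S.LG + S.gamma * ‖S.B‖ * S.LT) ^ 2 / (S.gamma * S.mu)

def c2 (S : NAPP n d m) : ℝ := 7 * (S.LG + S.LH) ^ 2 / (S.gamma * S.mu)

def c4 (S : NAPP n d m) : ℝ := (S.gamma * S.mu - (S.LG + S.LH)) / 2 - S.c2

def c3 (S : NAPP n d m) : ℝ := min (1 / 2) (min S.c4 (1 / (3 * S.gamma)))

/-- The standing assumptions (H₁)–(H₆) together with the properties of `K`, `μ` and `γ > 0`. -/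
structure Hyp (S : NAPP n d m) : Prop where
  closedU : IsClosed S.U
  convexU : Convex ℝ S.U
  gradGu : ∀ u v, HasGradientAt (fun x => S.G x v) (S.Gu u v) u
  gradGv : ∀ u v, HasGradientAt (fun y => S.G u y) (S.Gv u v) v
  lipG : ∀ u v u' v', ‖S.Gu u v - S.Gu u' v'‖ ^ 2 + ‖S.Gv u v - S.Gv u' v'‖ ^ 2
      ≤ S.LG ^ 2 * (‖u - u'‖ ^ 2 + ‖v - v'‖ ^ 2)
  gradH : ∀ v, HasGradientAt S.H (S.Hg v) v
  lipH : ∀ v v', ‖S.Hg v - S.Hg v'‖ ≤ S.LH * ‖v - v'‖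
  lscJ : LowerSemicontinuous S.J
  derivOm : ∀ u, HasFDerivAt S.Om (S.Omd u) u
  derivPhi : ∀ u, HasFDerivAt S.Phi (S.Phid u) u
  gradOmj : ∀ (j : Fin m) u, HasGradientAt (fun x => S.Om x j) (S.Omg j u) u
  lipOmj : ∀ (j : Fin m) u u', ‖S.Omg j u - S.Omg j u'‖ ≤ S.LOmj j * ‖u - u'‖
  lipTh : ∀ u u', ‖S.Th u - S.Th u'‖ ≤ S.LT * ‖u - u'‖
  injB : Function.Injective S.B
  imTh : ∀ u, ∃ v, S.B v = S.Th u
  muPos : 0 < S.mu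
  muB : ∀ x, S.mu * ‖x‖ ^ 2 ≤ ‖S.B x‖ ^ 2
  muBt : ∀ y : EuclideanSpace ℝ (Fin m), (∃ x, S.B x = y) →
      S.mu * ‖y‖ ^ 2 ≤ ‖(ContinuousLinearMap.adjoint S.B) y‖ ^ 2
  betaPos : 0 < S.beta
  strongK : ∀ x y, S.beta / 2 * ‖x - y‖ ^ 2 ≤ S.K x - S.K y - ⟪S.Kg y, x - y⟫
  gradK : ∀ u, HasGradientAt S.K (S.Kg u) u
  lipK : ∀ u u', ‖S.Kg u - S.Kg u'‖ ≤ S.LK * ‖u - u'‖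
  gammaPos : 0 < S.gamma

/-- The NAPP-AL iterates `w^k = (u^k, v^k, p^k)` with step sizes `ε^k > 0`. -/
structure Iter (S : NAPP n d m) where
  u : ℕ → EuclideanSpace ℝ (Fin n)
  v : ℕ → EuclideanSpace ℝ (Fin d)
  p : ℕ → EuclideanSpace ℝ (Fin m)
  eps : ℕ → ℝ
  epsPos : ∀ k, 0 < eps k
  uMem : ∀ k, u k ∈ S.U
  /-- `u^{k+1}` minimizes the linearized augmented Lagrangian over `U` -/
  uMin : ∀ k, ∀ x ∈ S.U,
      ⟪S.Gu (u k) (v k), u (k + 1)⟫ + S.J (u (k + 1))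
        + ⟪p k + S.gamma • (S.Th (u k) + S.B (v k)),
            S.Omd (u k) (u (k + 1)) + S.Phi (u (k + 1))⟫
        + (1 / eps k) * S.D (u (k + 1)) (u k)
      ≤ ⟪S.Gu (u k) (v k), x⟫ + S.J x
        + ⟪p k + S.gamma • (S.Th (u k) + S.B (v k)), S.Omd (u k) x + S.Phi x⟫
        + (1 / eps k) * S.D x (u k)
  /-- the first-order equation defining `v^{k+1}` -/
  vEq : ∀ k, (0 : EuclideanSpace ℝ (Fin d))
      = S.Gv (u k) (v k) + S.Hg (v k)
        + (ContinuousLinearMap.adjoint S.B) (p k + S.gamma • (S.Th (u k) + S.B (v k)))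
        + S.gamma • (ContinuousLinearMap.adjoint S.B) (S.B (v (k + 1) - v k))
  /-- the dual update -/
  pEq : ∀ k, p (k + 1) = p k + S.gamma • (S.Th (u (k + 1)) + S.B (v (k + 1)))

variable {S : NAPP n d m}

/-- `q^k = p^k + γ(Θ(u^k) + Bv^k)` -/
def Iter.q (it : Iter S) (k : ℕ) : EuclideanSpace ℝ (Fin m) :=
  it.p k + S.gamma • (S.Th (it.u k) + S.B (it.v k))

/-- `‖w^k - w^{k+1}‖²` -/
def Iter.wsq (it : Iter S) (k : ℕ) : ℝ :=
  ‖it.u k - it.u (k + 1)‖ ^ 2 + ‖it.v k - it.v (k + 1)‖ ^ 2 + ‖it.p k - it.p (k + 1)‖ ^ 2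

/-- `‖w^k - w^{k+1}‖` -/
def Iter.wnorm (it : Iter S) (k : ℕ) : ℝ := Real.sqrt (it.wsq k)

/-- distance from `w^k` to a given point `(ub, vb, pb)` -/
def Iter.distTo (it : Iter S) (k : ℕ) (ub : EuclideanSpace ℝ (Fin n))
    (vb : EuclideanSpace ℝ (Fin d)) (pb : EuclideanSpace ℝ (Fin m)) : ℝ :=
  Real.sqrt (‖it.u k - ub‖ ^ 2 + ‖it.v k - vb‖ ^ 2 + ‖it.p k - pb‖ ^ 2)

/-- the step-size cap `δ_k` -/
def Iter.delta (it : Iter S) (k : ℕ) : ℝ :=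
  S.beta / (S.LG + ‖it.q k‖ * S.LOm + S.gamma * S.LT ^ 2
    + 14 * S.gamma * ‖S.B‖ ^ 2 * S.LT ^ 2 / S.mu
    + 14 * (S.LG + S.gamma * ‖S.B‖ * S.LT) ^ 2 / (S.gamma * S.mu) + 1)

/-- the potential `Λ^k` (for `k ≥ 1`, using truncated subtraction `k - 1`) -/
def Iter.Lam (it : Iter S) (k : ℕ) : ℝ :=
  S.Lag (it.u k) (it.v k) (it.p k) + S.c1 * ‖it.u (k - 1) - it.u k‖ ^ 2
    + S.c2 * ‖it.v (k - 1) - it.v k‖ ^ 2 + 1 / (2 * S.gamma) * ‖it.p (k - 1) - it.p k‖ ^ 2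

/-- `ξ_u^k` -/
def Iter.xiu (it : Iter S) (k : ℕ) : EuclideanSpace ℝ (Fin n) :=
  S.Gu (it.u (k + 1)) (it.v (k + 1)) - S.Gu (it.u k) (it.v k)
    + (ContinuousLinearMap.adjoint (S.Omd (it.u (k + 1)) - S.Omd (it.u k))) (it.q k)
    + (ContinuousLinearMap.adjoint (S.Thd (it.u (k + 1)))) (it.p (k + 1) - it.p k)
    + S.gamma • (ContinuousLinearMap.adjoint (S.Thd (it.u (k + 1))))
        ((S.Th (it.u (k + 1)) + S.B (it.v (k + 1))) - (S.Th (it.u k) + S.B (it.v k)))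
    - (1 / it.eps k) • (S.Kg (it.u (k + 1)) - S.Kg (it.u k))

/-- `ξ_v^k` -/
def Iter.xiv (it : Iter S) (k : ℕ) : EuclideanSpace ℝ (Fin d) :=
  S.Gv (it.u (k + 1)) (it.v (k + 1)) - S.Gv (it.u k) (it.v k)
    + (S.Hg (it.v (k + 1)) - S.Hg (it.v k))
    + (ContinuousLinearMap.adjoint S.B) (it.p (k + 1) - it.p k)
    + S.gamma • (ContinuousLinearMap.adjoint S.B)
        ((S.Th (it.u (k + 1)) + S.B (it.v (k + 1))) - (S.Th (it.u k) + S.B (it.v k)))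
    - S.gamma • (ContinuousLinearMap.adjoint S.B) (S.B (it.v (k + 1) - it.v k))

/-- the value-proximity error bound (VP-EB) at `(ub, vb, pb)` with constants `κ₁, η, ν`. -/
def VPEB (it : Iter S) (Lstar κ₁ η ν : ℝ) (ub : EuclideanSpace ℝ (Fin n))
    (vb : EuclideanSpace ℝ (Fin d)) (pb : EuclideanSpace ℝ (Fin m)) : Prop :=
  ∀ k : ℕ, it.distTo (k + 1) ub vb pb < η →
    S.Lag (it.u (k + 1)) (it.v (k + 1)) (it.p (k + 1)) < Lstar + ν →
    S.Lag (it.u (k + 1)) (it.v (k + 1)) (it.p (k + 1)) - Lstar ≤ κ₁ * it.wsq k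

end NAPP

/-!
Testing the minimality of `u^{k+1}` against `u = u^k` gives the claimed decrease for the
linearization `∇Ω(u^k)(u^{k+1} - u^k) + Φ(u^{k+1}) - Φ(u^k)` in place of `Θ(u^{k+1}) - Θ(u^k)`,
the factor `β / (2ε^k)` coming from the strong convexity of `K` (and `D(u^k, u^k) = 0`).
The linearization error of each component `Ω_j` is at most `L_{Ω_j} / 2 ‖u^{k+1} - u^k‖²`
by the descent lemma, so pairing it with `q^k` costs at most `‖q^k‖ L_Ω / 2 ‖u^{k+1} - u^k‖²`.
-/

section

variable {E : Type*} [NormedAddCommGroup E] [InnerProductSpace ℝ E] [CompleteSpace E]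

theorem HasGradientAt.hasDerivAt_comp_add_smul {f : E → ℝ} {g x δ : E} {t : ℝ}
    (h : HasGradientAt f g (x + t • δ)) :
    HasDerivAt (fun s : ℝ => f (x + s • δ)) ⟪g, δ⟫ t := by
  have hline : HasDerivAt (fun s : ℝ => x + s • δ) δ t := by
    simpa using ((hasDerivAt_id t).smul_const δ).const_add x
  have := h.hasFDerivAt.comp_hasDerivAt t hline
  simp only [InnerProductSpace.toDual_apply_apply] at this
  exact this

theorem abs_sub_sub_inner_le_of_lipschitz_gradient {f : E → ℝ} {g : E → E} {L : ℝ}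
    (hf : ∀ x, HasGradientAt f (g x) x) (hg : ∀ x y, ‖g x - g y‖ ≤ L * ‖x - y‖) (x y : E) :
    |f y - f x - ⟪g x, y - x⟫| ≤ L / 2 * ‖y - x‖ ^ 2 := by
  set δ := y - x
  let φ : ℝ → ℝ := fun t => f (x + t • δ) - f x - t * ⟪g x, δ⟫
  have hφ : ∀ t, HasDerivAt φ (⟪g (x + t • δ), δ⟫ - ⟪g x, δ⟫) t := fun t =>
    (((hf _).hasDerivAt_comp_add_smul).sub_const (f x)).sub
      ((hasDerivAt_id t).mul_const ⟪g x, δ⟫ |>.congr_deriv (one_mul _))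
  have hB : ∀ t, HasDerivAt (fun t : ℝ => L / 2 * t ^ 2 * ‖δ‖ ^ 2) (L * t * ‖δ‖ ^ 2) t := by
    intro t
    refine (((hasDerivAt_pow 2 t).const_mul (L / 2)).mul_const (‖δ‖ ^ 2)).congr_deriv ?_
    ring
  have hbound : ∀ t ∈ Set.Ico (0 : ℝ) 1,
      ‖⟪g (x + t • δ), δ⟫ - ⟪g x, δ⟫‖ ≤ L * t * ‖δ‖ ^ 2 := fun t ht =>
    calc ‖⟪g (x + t • δ), δ⟫ - ⟪g x, δ⟫‖ = |⟪g (x + t • δ) - g x, δ⟫| := by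
          rw [← inner_sub_left, Real.norm_eq_abs]
      _ ≤ ‖g (x + t • δ) - g x‖ * ‖δ‖ := abs_real_inner_le_norm _ _
      _ ≤ L * ‖(x + t • δ) - x‖ * ‖δ‖ := by gcongr; exact hg _ _
      _ = L * t * ‖δ‖ ^ 2 := by
          rw [add_sub_cancel_left, norm_smul, Real.norm_of_nonneg ht.1]; ring
  have key := image_norm_le_of_norm_deriv_right_le_deriv_boundary
    (fun t _ => (hφ t).continuousAt.continuousWithinAt) (fun t _ => (hφ t).hasDerivWithinAt)
    (by simp [φ]) hB hbound (Set.right_mem_Icc.2 zero_le_one)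
  simpa [φ, δ, Real.norm_eq_abs] using key

end

theorem EuclideanSpace.inner_le_norm_mul_sum_of_abs_le {ι : Type*} [Fintype ι]
    (q r : EuclideanSpace ℝ ι) {c : ι → ℝ} (hr : ∀ j, |r j| ≤ c j) :
    ⟪q, r⟫ ≤ ‖q‖ * ∑ j, c j := by
  rw [PiLp.inner_apply, Finset.mul_sum]
  refine Finset.sum_le_sum fun j _ => ?_
  calc ⟪q j, r j⟫ ≤ ‖q j‖ * ‖r j‖ := real_inner_le_norm _ _
    _ ≤ ‖q‖ * c j :=
        mul_le_mul (PiLp.norm_apply_le q j) (hr j) (norm_nonneg _) (norm_nonneg _)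

namespace NAPP

variable {n d m : ℕ} {S : NAPP n d m}

theorem Hyp.Omd_apply_apply (hS : S.Hyp) (j : Fin m) (u w : EuclideanSpace ℝ (Fin n)) :
    S.Omd u w j = ⟪S.Omg j u, w⟫ := by
  have hcomp : HasFDerivAt (fun x => S.Om x j)
      ((EuclideanSpace.proj j : EuclideanSpace ℝ (Fin m) →L[ℝ] ℝ).comp (S.Omd u)) u :=
    (EuclideanSpace.proj (𝕜 := ℝ) j).hasFDerivAt.comp u (hS.derivOm u)
  simpa [InnerProductSpace.toDual_apply_apply] using
    congrArg (fun T => T w) (hcomp.unique (hS.gradOmj j u).hasFDerivAt)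

theorem Hyp.inner_Om_sub_sub_le (hS : S.Hyp) (q : EuclideanSpace ℝ (Fin m))
    (a b : EuclideanSpace ℝ (Fin n)) :
    ⟪q, S.Om b - S.Om a - S.Omd a (b - a)⟫ ≤ ‖q‖ * S.LOm / 2 * ‖b - a‖ ^ 2 := by
  have hcoord : ∀ j, |(S.Om b - S.Om a - S.Omd a (b - a)) j| ≤ S.LOmj j / 2 * ‖b - a‖ ^ 2 := by
    intro j
    simpa only [PiLp.sub_apply, hS.Omd_apply_apply] using
      abs_sub_sub_inner_le_of_lipschitz_gradient (hS.gradOmj j) (hS.lipOmj j) a b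
  calc _ ≤ ‖q‖ * ∑ j, S.LOmj j / 2 * ‖b - a‖ ^ 2 :=
        EuclideanSpace.inner_le_norm_mul_sum_of_abs_le q _ hcoord
    _ = ‖q‖ * S.LOm / 2 * ‖b - a‖ ^ 2 := by
        rw [← Finset.sum_mul, ← Finset.sum_div, LOm]; ring

theorem Iter.linearized_decrease (hS : S.Hyp) (it : Iter S) (k : ℕ) :
    ⟪S.Gu (it.u k) (it.v k), it.u (k + 1) - it.u k⟫ + S.J (it.u (k + 1)) - S.J (it.u k)
        + ⟪it.q k, S.Omd (it.u k) (it.u (k + 1) - it.u k)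
          + (S.Phi (it.u (k + 1)) - S.Phi (it.u k))⟫
      ≤ -(S.beta / (2 * it.eps k)) * ‖it.u (k + 1) - it.u k‖ ^ 2 := by
  have hmin : ⟪S.Gu (it.u k) (it.v k), it.u (k + 1)⟫ + S.J (it.u (k + 1))
        + ⟪it.q k, S.Omd (it.u k) (it.u (k + 1)) + S.Phi (it.u (k + 1))⟫
        + 1 / it.eps k * S.D (it.u (k + 1)) (it.u k)
      ≤ ⟪S.Gu (it.u k) (it.v k), it.u k⟫ + S.J (it.u k)
        + ⟪it.q k, S.Omd (it.u k) (it.u k) + S.Phi (it.u k)⟫ := by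
    have h := it.uMin k (it.u k) (it.uMem k)
    rw [show S.D (it.u k) (it.u k) = 0 by simp [D], mul_zero, add_zero] at h
    exact h
  have hprox : S.beta / (2 * it.eps k) * ‖it.u (k + 1) - it.u k‖ ^ 2
      ≤ 1 / it.eps k * S.D (it.u (k + 1)) (it.u k) := by
    calc _ = 1 / it.eps k * (S.beta / 2 * ‖it.u (k + 1) - it.u k‖ ^ 2) := by ring
      _ ≤ _ := mul_le_mul_of_nonneg_left (hS.strongK _ _) (one_div_pos.2 (it.epsPos k)).le
  simp only [map_sub, inner_add_right, inner_sub_right] at hmin ⊢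
  linarith

end NAPP

open NAPP Filter

theorem stmt7 (n d m : ℕ) (S : NAPP n d m) (hS : S.Hyp) (it : Iter S) (k : ℕ) :
    ⟪S.Gu (it.u k) (it.v k), it.u (k + 1) - it.u k⟫ + S.J (it.u (k + 1)) - S.J (it.u k)
        + ⟪it.q k, S.Th (it.u (k + 1)) - S.Th (it.u k)⟫
      ≤ -(S.beta / (2 * it.eps k) - ‖it.q k‖ * S.LOm / 2) * ‖it.u k - it.u (k + 1)‖ ^ 2 := by
  have hTh : S.Th (it.u (k + 1)) - S.Th (it.u k)
      = (S.Omd (it.u k) (it.u (k + 1) - it.u k) + (S.Phi (it.u (k + 1)) - S.Phi (it.u k)))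
        + (S.Om (it.u (k + 1)) - S.Om (it.u k) - S.Omd (it.u k) (it.u (k + 1) - it.u k)) := by
    simp only [Th]; abel
  rw [hTh, inner_add_right, norm_sub_rev]
  linarith [it.linearized_decrease hS k, hS.inner_Om_sub_sub_le (it.q k) (it.u k) (it.u (k + 1))]
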